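/- arXiv:1911.00471 — 4 statements merged into one kernel-verified Lean document; each statement's English description precedes it below -/
import Mathlib

section
/- The extreme points of the simplex B_{d,N} := {(λ₁,…,λ_d) ∈ ℝ^d : λ₁ ≥ λ₂ ≥ … ≥ λ_d ≥ 0 and λ₁+…+λ_d = N} are exactly the d points v_k = (N/k, …, N/k, 0, …, 0) for k = 1, …, d, where the first k coordinates equal N/k and the remaining d−k coordinates are 0. -/
/-!
Every `x ∈ B_{d,N}` is the convex combination `∑ₖ (k (xₖ - xₖ₊₁) / N) • vₖ` of the vertices
(with `x_{d+1} = 0`; the weights sum to `1` by Abel summation), so `B_{d,N}` is the convex hull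
of `v₁, …, v_d`. The matrix with rows `vₖ` is lower triangular with diagonal `N / k`, so the
`vₖ` are linearly independent, and every member of a linearly independent family is an extreme
point of the convex hull of the family.
-/

open Finset

section ConvexHullRange
variable {𝕜 E ι : Type*} [Field 𝕜] [LinearOrder 𝕜] [IsStrictOrderedRing 𝕜]
  [AddCommGroup E] [Module 𝕜 E] [Fintype ι]

theorem convexHull_range_eq_image_stdSimplex (v : ι → E) :
    convexHull 𝕜 (Set.range v) = (fun w : ι → 𝕜 => ∑ i, w i • v i) '' stdSimplex 𝕜 ι := by
  classical
  have hL : (fun w : ι → 𝕜 => ∑ i, w i • v i) = Fintype.linearCombination 𝕜 v :=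
    funext fun w => (Fintype.linearCombination_apply 𝕜 v w).symm
  rw [← convexHull_rangle_single_eq_stdSimplex, hL, LinearMap.image_convexHull, ← Set.range_comp]
  congr
  ext i
  simp [Fintype.linearCombination_apply_single]

theorem LinearIndependent.extremePoints_convexHull_range {v : ι → E}
    (hv : LinearIndependent 𝕜 v) :
    (convexHull 𝕜 (Set.range v)).extremePoints 𝕜 = Set.range v := by
  classical
  refine extremePoints_convexHull_subset.antisymm ?_
  rintro _ ⟨i, rfl⟩
  refine mem_extremePoints_iff_left.2 ⟨subset_convexHull 𝕜 _ ⟨i, rfl⟩, ?_⟩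
  rw [convexHull_range_eq_image_stdSimplex]
  rintro _ ⟨μ, hμ, rfl⟩ _ ⟨ν, hν, rfl⟩ ⟨a, b, ha, hb, -, h⟩
  have hcoef : ∀ j, a * μ j + b * ν j = (Pi.single i 1 : ι → 𝕜) j :=
    Fintype.linearIndependent_iffₛ.1 hv (fun j => a * μ j + b * ν j) (Pi.single i 1) <| by
      simpa [add_smul, mul_smul, Finset.smul_sum, Finset.sum_add_distrib, Pi.single_apply] using h
  have hμ_off : ∀ j ≠ i, μ j = 0 := fun j hj => by
    have h0 : a * μ j = 0 := by
      linarith [hcoef j, Pi.single_eq_of_ne (M := fun _ : ι => 𝕜) hj 1, mul_nonneg ha.le (hμ.1 j),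
        mul_nonneg hb.le (hν.1 j)]
    exact (mul_eq_zero.1 h0).resolve_left ha.ne'
  have hμ_eq : μ = Pi.single i 1 := by
    have hμi : μ i = 1 := by
      rw [← hμ.2, Finset.sum_eq_single i (fun j _ hj => hμ_off j hj) (by simp)]
    ext j
    obtain rfl | hj := eq_or_ne j i
    · simp [hμi]
    · simp [hμ_off j hj, hj]
  simp [hμ_eq, Pi.single_apply]

end ConvexHullRange

theorem sum_range_succ_mul_sub_succ {R : Type*} [CommRing R] (X : ℕ → R) (d : ℕ) :
    ∑ n ∈ range d, ((n : R) + 1) * (X n - X (n + 1)) = ∑ n ∈ range d, X n - d * X d := by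
  induction d with
  | zero => simp
  | succ d ih => rw [sum_range_succ, ih, sum_range_succ]; push_cast; ring

theorem sum_range_ite_le_sub_succ {R : Type*} [AddCommGroup R] (X : ℕ → R) {i d : ℕ}
    (hid : i ≤ d) :
    ∑ n ∈ range d, (if i ≤ n then X n - X (n + 1) else 0) = X i - X d := by
  rw [← sum_filter, range_eq_Ico, Ico_filter_le, max_eq_right (Nat.zero_le i)]
  simpa only [Pi.neg_apply, neg_sub_neg] using sum_Ico_sub (-X) hid

noncomputable def simplexVertex (d : ℕ) (N : ℝ) (k : ℕ) : Fin d → ℝ :=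
  fun i => if (i : ℕ) < k then N / k else 0

def bosonicSimplex (d : ℕ) (N : ℝ) : Set (Fin d → ℝ) :=
  {x | (∀ i j : Fin d, i ≤ j → x j ≤ x i) ∧ (∀ i, 0 ≤ x i) ∧ ∑ i, x i = N}

variable {d : ℕ} {N : ℝ}

theorem sum_simplexVertex {k : ℕ} (hk : k ≠ 0) (hkd : k ≤ d) : ∑ i, simplexVertex d N k i = N := by
  show ∑ i : Fin d, (if (i : ℕ) < k then N / k else 0) = N
  rw [Fin.sum_univ_eq_sum_range (fun n => if n < k then N / k else 0) d,
    ← sum_range_add_sum_Ico _ hkd, sum_ite_of_true (fun n hn => mem_range.1 hn),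
    sum_ite_of_false (fun n hn => (mem_Ico.1 hn).1.not_gt), sum_const_zero, add_zero, sum_const,
    card_range, nsmul_eq_mul]
  field_simp

theorem simplexVertex_mem_bosonicSimplex (hN : 0 ≤ N) {k : ℕ} (hk : k ≠ 0) (hkd : k ≤ d) :
    simplexVertex d N k ∈ bosonicSimplex d N := by
  refine ⟨fun i j hij => ?_, fun i => ?_, sum_simplexVertex hk hkd⟩
  · have : (i : ℕ) ≤ j := hij
    simp only [simplexVertex]
    split_ifs <;> first | omega | positivity | rfl
  · simp only [simplexVertex]
    split_ifs <;> positivity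

theorem convex_bosonicSimplex : Convex ℝ (bosonicSimplex d N) := by
  rintro y ⟨hy_anti, hy_nonneg, hy_sum⟩ z ⟨hz_anti, hz_nonneg, hz_sum⟩ a b ha hb hab
  refine ⟨fun i j hij => ?_, fun i => ?_, ?_⟩
  · simp only [Pi.add_apply, Pi.smul_apply, smul_eq_mul]
    gcongr
    exacts [hy_anti i j hij, hz_anti i j hij]
  · simp only [Pi.add_apply, Pi.smul_apply, smul_eq_mul]
    exact add_nonneg (mul_nonneg ha (hy_nonneg i)) (mul_nonneg hb (hz_nonneg i))
  · simp only [Pi.add_apply, Pi.smul_apply, smul_eq_mul, sum_add_distrib, ← mul_sum, hy_sum, hz_sum]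
    rw [← add_mul, hab, one_mul]

theorem bosonicSimplex_subset_convexHull (hN : 0 < N) :
    bosonicSimplex d N ⊆ convexHull ℝ (Set.range fun j : Fin d => simplexVertex d N (j + 1)) := by
  rintro x ⟨hx_anti, hx_nonneg, hx_sum⟩
  set X : ℕ → ℝ := fun n => if h : n < d then x ⟨n, h⟩ else 0
  have hX_fin (i : Fin d) : X i = x i := by simp [X]
  have hX_d : X d = 0 := by simp [X]
  have hX_step (n : ℕ) : X (n + 1) ≤ X n := by
    by_cases h : n + 1 < d
    · simpa [X, h, Nat.lt_of_succ_lt h] using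
        hx_anti ⟨n, by omega⟩ ⟨n + 1, h⟩ (by simp [Fin.le_def])
    · by_cases h' : n < d
      · simpa [X, h, h'] using hx_nonneg ⟨n, h'⟩
      · simp [X, h, h']
  have hX_sum : ∑ n ∈ range d, X n = N := by
    rw [← Fin.sum_univ_eq_sum_range, ← hx_sum]
    exact sum_congr rfl fun i _ => hX_fin i
  rw [convexHull_range_eq_image_stdSimplex]
  refine ⟨fun j => (j + 1) * (X j - X (j + 1)) / N, ⟨fun j => ?_, ?_⟩, ?_⟩
  · have := sub_nonneg.2 (hX_step j)
    positivity
  · rw [← sum_div, Fin.sum_univ_eq_sum_range (fun n => ((n : ℝ) + 1) * (X n - X (n + 1))) d,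
      sum_range_succ_mul_sub_succ, hX_sum, hX_d, mul_zero, sub_zero, div_self hN.ne']
  · funext i
    have hterm (j : Fin d) : (j + 1) * (X j - X (j + 1)) / N * simplexVertex d N (j + 1) i
        = if (i : ℕ) ≤ j then X j - X (j + 1) else 0 := by
      simp only [simplexVertex, Nat.cast_add, Nat.cast_one]
      split_ifs <;> first | omega | simp | field_simp
    simp only [Finset.sum_apply, Pi.smul_apply, smul_eq_mul]
    calc ∑ j : Fin d, (j + 1) * (X j - X (j + 1)) / N * simplexVertex d N (j + 1) i
        = ∑ j : Fin d, if (i : ℕ) ≤ j then X j - X (j + 1) else 0 :=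
          sum_congr rfl fun j _ => hterm j
      _ = ∑ n ∈ range d, if (i : ℕ) ≤ n then X n - X (n + 1) else 0 :=
        Fin.sum_univ_eq_sum_range (fun n => if (i : ℕ) ≤ n then X n - X (n + 1) else 0) d
      _ = x i := by rw [sum_range_ite_le_sub_succ X i.isLt.le, hX_d, sub_zero, hX_fin]

theorem bosonicSimplex_eq_convexHull (hN : 0 < N) :
    bosonicSimplex d N = convexHull ℝ (Set.range fun j : Fin d => simplexVertex d N (j + 1)) :=
  (bosonicSimplex_subset_convexHull hN).antisymm <| convexHull_min
    (Set.range_subset_iff.2 fun j =>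
      simplexVertex_mem_bosonicSimplex hN.le j.val.succ_ne_zero j.isLt)
    convex_bosonicSimplex

theorem linearIndependent_simplexVertex (hN : N ≠ 0) :
    LinearIndependent ℝ (fun j : Fin d => simplexVertex d N (j + 1)) := by
  let M : Matrix (Fin d) (Fin d) ℝ := Matrix.of fun j => simplexVertex d N (j + 1)
  have hM : M.IsLowerTriangular := fun j i hji => by
    have : ¬ (i : ℕ) < j + 1 := by
      have := OrderDual.toDual_lt_toDual.1 hji
      rw [Fin.lt_def] at this; omega
    simp [M, simplexVertex, this]
  refine Matrix.linearIndependent_rows_of_det_ne_zero (A := M) ?_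
  rw [Matrix.det_of_isLowerTriangular M hM]
  refine prod_ne_zero_iff.2 fun j _ => ?_
  simp only [M, Matrix.of_apply, simplexVertex, lt_add_one, if_true]
  exact div_ne_zero hN (Nat.cast_ne_zero.2 (Nat.succ_ne_zero j))

theorem extremePoints_bosonicSimplex (hN : 0 < N) :
    (bosonicSimplex d N).extremePoints ℝ =
      Set.range fun j : Fin d => simplexVertex d N (j + 1) := by
  rw [bosonicSimplex_eq_convexHull hN,
    (linearIndependent_simplexVertex hN.ne').extremePoints_convexHull_range]

theorem extremePoints_bosonic_simplex_general (d : ℕ) (N : ℝ) (hN : 0 < N) :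
    Set.extremePoints ℝ
        {x : Fin d → ℝ |
          (∀ i j : Fin d, i ≤ j → x j ≤ x i) ∧ (∀ i, 0 ≤ x i) ∧ ∑ i, x i = N}
      = {v : Fin d → ℝ | ∃ k : ℕ, 1 ≤ k ∧ k ≤ d ∧
          v = fun i : Fin d => if (i : ℕ) < k then N / k else 0} := by
  rw [← bosonicSimplex, extremePoints_bosonicSimplex hN]
  ext v
  constructor
  · rintro ⟨j, rfl⟩
    exact ⟨j + 1, by omega, j.isLt, rfl⟩
  · rintro ⟨k, hk, hkd, rfl⟩
    refine ⟨⟨k - 1, by omega⟩, ?_⟩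
    simp only [Nat.sub_add_cancel hk]
    rfl

/-- The extreme points of the bosonic simplex
`B_{d,N} = {λ ∈ ℝ^d : λ₁ ≥ … ≥ λ_d ≥ 0, ∑ λᵢ = N}` are exactly the `d` points
`v_k = (N/k, …, N/k, 0, …, 0)` (first `k` coordinates `N/k`), `k = 1, …, d`. -/
theorem extremePoints_bosonic_simplex (d : ℕ) (hd : 1 ≤ d) (N : ℝ) (hN : 0 < N) :
    Set.extremePoints ℝ
        {x : Fin d → ℝ |
          (∀ i j : Fin d, i ≤ j → x j ≤ x i) ∧ (∀ i, 0 ≤ x i) ∧ ∑ i, x i = N}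
      = {v : Fin d → ℝ | ∃ k : ℕ, 1 ≤ k ∧ k ≤ d ∧
          v = fun i : Fin d => if (i : ℕ) < k then N / k else 0} :=
  extremePoints_bosonic_simplex_general d N hN
end

section
/- Let X₁,…,X_d be i.i.d. random variables uniformly distributed on [0,1]. Then for every x ∈ ℝ with x ≥ 0, the probability P[X₁+…+X_d ≤ x] equals (1/d!) · ∑_{k=0}^{⌊x⌋} (−1)^k C(d,k) (x−k)^d (the Irwin–Hall distribution function). -/
/-!
Up to the null set where some coordinate equals `1`, the event is the corner simplex
`{X ≥ 0, ∑ X ≤ x}` minus the half-spaces `{X i ≥ 1}`. By inclusion–exclusion its volume is an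
alternating sum over sets `t` of coordinates; translating by the indicator of `t` carries the
corner simplex cut by the half-spaces of `t` onto the corner simplex of size `x - #t`, whose
volume is `(x - #t)^d / d!` by Fubini, or `0` once `#t > x`.
-/

open Finset MeasureTheory
open scoped ENNReal Nat

theorem Finset.sum_range_eq_sum_range_of_eq_zero {M : Type*} [AddCommMonoid M] {f : ℕ → M}
    {m n : ℕ} (hm : ∀ k ≥ m, f k = 0) (hn : ∀ k ≥ n, f k = 0) :
    ∑ k ∈ range m, f k = ∑ k ∈ range n, f k := by
  rw [← eventually_constant_sum hm (le_max_left m n),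
    eventually_constant_sum hn (le_max_right m n)]

theorem measureReal_sdiff_biUnion_eq_sum_powerset {α ι : Type*} [MeasurableSpace α]
    [DecidableEq ι] (μ : Measure α) {B : ι → Set α} (hB : ∀ i, MeasurableSet (B i))
    (s : Finset ι) {A : Set α} (hA : μ A ≠ ∞) :
    μ.real (A \ ⋃ i ∈ s, B i) = ∑ t ∈ s.powerset, (-1 : ℝ) ^ #t * μ.real (A ∩ ⋂ i ∈ t, B i) := by
  induction s using Finset.induction_on generalizing A with
  | empty => simp
  | @insert a s ha ih =>
    rw [set_biUnion_insert, ← Set.sdiff_sdiff, ih (measure_ne_top_of_subset Set.sdiff_subset hA),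
      sum_powerset_insert ha, ← sum_add_distrib]
    refine sum_congr rfl fun t ht => ?_
    have hat : a ∉ t := fun h => ha (mem_powerset.1 ht h)
    rw [card_insert_of_notMem hat, pow_succ, set_biInter_insert, Set.inter_left_comm,
      ← Set.inter_sdiff_right_comm, ← measureReal_sdiff_add_inter (hB a)
        (measure_ne_top_of_subset Set.inter_subset_left hA), Set.inter_comm (B a)]
    ring

theorem lintegral_Icc_sub_pow_div_factorial {x : ℝ} (hx : 0 ≤ x) (d : ℕ) :
    ∫⁻ t in Set.Icc 0 x, ENNReal.ofReal ((x - t) ^ d / d !) =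
      ENNReal.ofReal (x ^ (d + 1) / (d + 1)!) := by
  rw [← ofReal_integral_eq_lintegral_ofReal (Continuous.integrableOn_Icc (by fun_prop))]
  · rw [integral_Icc_eq_integral_Ioc, ← intervalIntegral.integral_of_le hx,
      intervalIntegral.integral_div, intervalIntegral.integral_comp_sub_left (fun u => u ^ d) x]
    simp [integral_pow, Nat.factorial_succ]
    field_simp
  · filter_upwards [ae_restrict_mem measurableSet_Icc] with t ht
    have : 0 ≤ x - t := sub_nonneg.2 ht.2
    positivity

def cornerSimplex (d : ℕ) (x : ℝ) : Set (Fin d → ℝ) := {X | (∀ i, 0 ≤ X i) ∧ ∑ i, X i ≤ x}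

namespace cornerSimplex

variable {d : ℕ} {x : ℝ}

theorem eq_empty_of_neg (hx : x < 0) : cornerSimplex d x = ∅ :=
  Set.eq_empty_of_forall_notMem fun _ ⟨hX, hsum⟩ =>
    hx.not_ge (hsum.trans' (sum_nonneg fun i _ => hX i))

theorem succ_eq_preimage :
    cornerSimplex (d + 1) x = MeasurableEquiv.piFinSuccAbove (fun _ => ℝ) 0 ⁻¹'
      {p | 0 ≤ p.1 ∧ p.2 ∈ cornerSimplex d (x - p.1)} := by
  ext X
  simp [cornerSimplex, Fin.tail, Fin.forall_fin_succ, Fin.sum_univ_succ, le_sub_iff_add_le',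
    and_assoc]

theorem inter_biInter_one_le_eq_preimage (t : Finset (Fin d)) :
    cornerSimplex d x ∩ ⋂ i ∈ t, {X | 1 ≤ X i} =
      (fun X => X - fun i => if i ∈ t then 1 else 0) ⁻¹' cornerSimplex d (x - #t) := by
  ext X
  have hcoord (i : Fin d) :
      (0 ≤ X i ∧ (i ∈ t → 1 ≤ X i)) ↔ 0 ≤ X i - if i ∈ t then 1 else 0 := by
    split_ifs with hi <;> constructor <;> grind
  simp only [cornerSimplex, Set.mem_inter_iff, Set.mem_iInter, Set.mem_preimage,
    Set.mem_ofPred_eq, Pi.sub_apply, sum_sub_distrib, sum_boole, filter_univ_mem,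
    sub_le_sub_iff_right, ← hcoord, forall_and]
  tauto

end cornerSimplex

theorem volume_cornerSimplex (d : ℕ) {x : ℝ} (hx : 0 ≤ x) :
    volume (cornerSimplex d x) = ENNReal.ofReal (x ^ d / d !) := by
  induction d generalizing x with
  | zero =>
    have : cornerSimplex 0 x = Set.univ := by ext X; simp [cornerSimplex, hx]
    simp [this, volume_pi]
  | succ d ih =>
    set T : Set (ℝ × (Fin d → ℝ)) := {p | 0 ≤ p.1 ∧ p.2 ∈ cornerSimplex d (x - p.1)}
    have hT : MeasurableSet T := by
      simp only [T, cornerSimplex, Set.mem_ofPred_eq]; measurability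
    have hslice (t : ℝ) : volume (Prod.mk t ⁻¹' T) =
        (Set.Icc 0 x).indicator (fun t => ENNReal.ofReal ((x - t) ^ d / d !)) t := by
      by_cases ht : t ∈ Set.Icc 0 x
      · have : Prod.mk t ⁻¹' T = cornerSimplex d (x - t) := by ext; simp [T, ht.1]
        rw [this, ih (sub_nonneg.2 ht.2), Set.indicator_of_mem ht]
      · have : Prod.mk t ⁻¹' T = ∅ :=
          Set.eq_empty_of_forall_notMem fun _ ⟨ht0, hz⟩ => by
            rwa [cornerSimplex.eq_empty_of_neg (sub_neg.2 (not_le.1 fun h => ht ⟨ht0, h⟩))]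
              at hz
        rw [this, Set.indicator_of_notMem ht, measure_empty]
    rw [cornerSimplex.succ_eq_preimage,
      (volume_preserving_piFinSuccAbove (fun _ => ℝ) 0).measure_preimage hT.nullMeasurableSet,
      Measure.volume_eq_prod, Measure.prod_apply hT, lintegral_congr hslice,
      lintegral_indicator measurableSet_Icc, lintegral_Icc_sub_pow_div_factorial hx]

theorem measureReal_cornerSimplex (d : ℕ) {x : ℝ} (hx : 0 ≤ x) :
    volume.real (cornerSimplex d x) = x ^ d / d ! := by
  rw [measureReal_def, volume_cornerSimplex d hx, ENNReal.toReal_ofReal (by positivity)]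

theorem measureReal_cornerSimplex_of_neg (d : ℕ) {x : ℝ} (hx : x < 0) :
    volume.real (cornerSimplex d x) = 0 := by
  rw [cornerSimplex.eq_empty_of_neg hx, measureReal_empty]

theorem measureReal_cornerSimplex_inter_biInter_one_le {d : ℕ} (x : ℝ) (t : Finset (Fin d)) :
    volume.real (cornerSimplex d x ∩ ⋂ i ∈ t, {X | 1 ≤ X i}) =
      volume.real (cornerSimplex d (x - #t)) := by
  simp only [measureReal_def, cornerSimplex.inter_biInter_one_le_eq_preimage, sub_eq_add_neg,
    measure_preimage_add_right]

theorem unitCube_sum_le_ae_eq_cornerSimplex_sdiff (d : ℕ) (x : ℝ) :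
    {X : Fin d → ℝ | (∀ i, X i ∈ Set.Icc (0 : ℝ) 1) ∧ ∑ i, X i ≤ x} =ᵐ[volume]
      (cornerSimplex d x \ ⋃ i, {X | 1 ≤ X i} : Set (Fin d → ℝ)) := by
  have hne : ∀ᵐ X : Fin d → ℝ, ∀ i, X i ≠ 1 := ae_all_iff.2 fun i => by
    simpa [ae_iff, volume_pi] using Measure.pi_hyperplane (fun _ => volume) i 1
  refine Filter.eventuallyEq_set.2 ?_
  filter_upwards [hne] with X hX
  have hcoord (i : Fin d) : X i ∈ Set.Icc 0 1 ↔ 0 ≤ X i ∧ X i < 1 :=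
    and_congr_right' (le_iff_lt_or_eq.trans (or_iff_left (hX i)))
  simp only [cornerSimplex, Set.mem_sdiff, Set.mem_iUnion, Set.mem_ofPred_eq, not_exists, not_le,
    hcoord, forall_and]
  tauto

theorem irwin_hall_cdf_general (d : ℕ) (x : ℝ) (hx : 0 ≤ x) :
    volume {X : Fin d → ℝ | (∀ i, X i ∈ Set.Icc (0 : ℝ) 1) ∧ ∑ i, X i ≤ x}
      = ENNReal.ofReal
          ((1 / (Nat.factorial d : ℝ)) *
            ∑ k ∈ Finset.range (⌊x⌋₊ + 1), (-1 : ℝ) ^ k * (d.choose k) * (x - k) ^ d) := by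
  set F : ℕ → ℝ := fun k => (-1) ^ k * d.choose k * volume.real (cornerSimplex d (x - k))
  have hfin : volume (cornerSimplex d x) ≠ ∞ := by
    rw [volume_cornerSimplex d hx]; exact ENNReal.ofReal_ne_top
  have inclusion_exclusion :
      volume.real (cornerSimplex d x \ ⋃ i, {X | 1 ≤ X i}) = ∑ k ∈ range (d + 1), F k := by
    have := measureReal_sdiff_biUnion_eq_sum_powerset volume
      (B := fun i => {X : Fin d → ℝ | 1 ≤ X i})
      (fun i => measurableSet_le measurable_const (measurable_pi_apply i)) univ hfin
    simp only [mem_univ, Set.iUnion_true, measureReal_cornerSimplex_inter_biInter_one_le] at this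
    rw [this, sum_powerset_apply_card fun k => (-1 : ℝ) ^ k * volume.real (cornerSimplex d (x - k))]
    simp [F, mul_assoc, mul_left_comm]
  have hF_large (k : ℕ) (hk : k ≥ ⌊x⌋₊ + 1) : F k = 0 := by
    simp only [F, measureReal_cornerSimplex_of_neg d (sub_neg.2 ((Nat.floor_lt hx).1 hk)),
      mul_zero]
  have hF_small (k : ℕ) (hk : k ∈ range (⌊x⌋₊ + 1)) :
      F k = (-1) ^ k * d.choose k * (x - k) ^ d / d ! := by
    have hkx : (k : ℝ) ≤ x := (Nat.le_floor_iff hx).1 (mem_range_succ_iff.1 hk)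
    simp only [F, measureReal_cornerSimplex d (sub_nonneg.2 hkx), mul_div_assoc]
  rw [measure_congr (unitCube_sum_le_ae_eq_cornerSimplex_sdiff d x),
    ← ofReal_measureReal (measure_ne_top_of_subset Set.sdiff_subset hfin), inclusion_exclusion,
    sum_range_eq_sum_range_of_eq_zero (fun k hk => by simp [F, Nat.choose_eq_zero_of_lt hk])
      hF_large, sum_congr rfl hF_small, mul_sum]
  simp [div_eq_inv_mul, mul_comm]

/-- **Irwin–Hall.** For `X₁,…,X_d` i.i.d. uniform on `[0,1]` and `x ≥ 0`,
`P[X₁+…+X_d ≤ x] = (1/d!) ∑_{k=0}^{⌊x⌋} (−1)^k C(d,k) (x−k)^d`. The probability is expressed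
as Lebesgue volume of the corresponding subset of the unit cube `[0,1]^d`. -/
theorem irwin_hall_cdf (d : ℕ) (hd : 1 ≤ d) (x : ℝ) (hx : 0 ≤ x) :
    volume {X : Fin d → ℝ | (∀ i, X i ∈ Set.Icc (0 : ℝ) 1) ∧ ∑ i, X i ≤ x}
      = ENNReal.ofReal
          ((1 / (Nat.factorial d : ℝ)) *
            ∑ k ∈ Finset.range (⌊x⌋₊ + 1), (-1 : ℝ) ^ k * (d.choose k) * (x - k) ^ d) :=
  irwin_hall_cdf_general d x hx
end

section
/- Let Ψ ∈ Λ^N ℂ^d be a normalized fermionic state whose 1-body reduced density matrix γ₁^Ψ has an eigenvector u with eigenvalue 1. Then Ψ = u ∧ Φ for some normalized Φ ∈ Λ^{N−1} ℂ^{d−1}, where Φ lies in the antisymmetric power of the orthogonal complement of u. Similarly, if γ₁^Ψ has an eigenvector v with eigenvalue 0, then Ψ lies in Λ^N of the orthogonal complement of v. -/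
open Finset

/-- Antisymmetry: `Ψ ∈ Λ^N ℂ^d ⊂ (ℂ^d)^{⊗N}`, in coordinates `Ψ : (Fin N → Fin d) → ℂ`. -/
def Antisym (N d : ℕ) (Ψ : (Fin N → Fin d) → ℂ) : Prop :=
  ∀ σ : Equiv.Perm (Fin N), ∀ f : Fin N → Fin d,
    Ψ (f ∘ σ) = ((Equiv.Perm.sign σ : ℤ) : ℂ) * Ψ f

/-- The 1-body reduced density matrix `γ₁^Ψ = N·Tr_{2…N}[|Ψ⟩⟨Ψ|]` of an antisymmetric state,
written as the sum over tensor slots of the corresponding partial traces. -/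
noncomputable def rdm1 (N d : ℕ) (Ψ : (Fin N → Fin d) → ℂ) : Matrix (Fin d) (Fin d) ℂ :=
  Matrix.of fun a b => ∑ i : Fin N, ∑ f : Fin N → Fin d,
    if f i = b then Ψ (Function.update f i a) * (starRingEnd ℂ) (Ψ f) else 0

/-- The normalized wedge `u ∧ Φ = √(N+1)·Π_A^{N+1}(u ⊗ Φ)` of a 1-body vector `u ∈ ℂ^d` with
an antisymmetric `Φ ∈ Λ^N ℂ^d`, in coordinates (Laplace expansion along the new slot). -/
noncomputable def wedge1 (N d : ℕ) (u : Fin d → ℂ) (Φ : (Fin N → Fin d) → ℂ) :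
    (Fin (N + 1) → Fin d) → ℂ :=
  fun f => ((Real.sqrt (N + 1) : ℂ))⁻¹ *
    ∑ i : Fin (N + 1), (-1 : ℂ) ^ (i : ℕ) * u (f i) * Φ (fun j => f (i.succAbove j))

section SlaterAux
variable {N d : ℕ}

lemma sum_insertNth (i : Fin (N+1)) (F : (Fin (N+1) → Fin d) → ℂ) :
    ∑ f : Fin (N+1) → Fin d, F f
      = ∑ b : Fin d, ∑ h : Fin N → Fin d, F (Fin.insertNth i b h) := by
  rw [← Equiv.sum_comp (Fin.insertNthEquiv (fun _ => Fin d) i) F, Fintype.sum_prod_type]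
  rfl

lemma swap2 {Ψ : (Fin (N+1) → Fin d) → ℂ} (hA : Antisym (N+1) d Ψ)
    {i j : Fin (N+1)} (hij : i ≠ j) (f : Fin (N+1) → Fin d) (a b : Fin d) :
    Ψ (Function.update (Function.update f i a) j b)
      = - Ψ (Function.update (Function.update f i b) j a) := by
  have key : Function.update (Function.update f i b) j a ∘ ⇑(Equiv.swap i j)
      = Function.update (Function.update f i a) j b := by
    funext k
    rcases eq_or_ne k i with rfl | hki
    · rw [Function.comp_apply, Equiv.swap_apply_left, Function.update_self,
        Function.update_of_ne hij, Function.update_self]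
    rcases eq_or_ne k j with rfl | hkj
    · rw [Function.comp_apply, Equiv.swap_apply_right, Function.update_of_ne hij,
        Function.update_self, Function.update_self]
    · rw [Function.comp_apply, Equiv.swap_apply_of_ne_of_ne hki hkj,
        Function.update_of_ne hkj, Function.update_of_ne hki,
        Function.update_of_ne hkj, Function.update_of_ne hki]
  have h2 := hA (Equiv.swap i j) (Function.update (Function.update f i b) j a)
  rw [key, Equiv.Perm.sign_swap hij] at h2
  rw [h2]; push_cast; ring


lemma insertNth_eq_comp (i : Fin (N+1)) (a : Fin d) (h : Fin N → Fin d) :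
    Fin.insertNth i a h = Fin.cons a h ∘ ⇑(Fin.cycleRange i) := by
  funext k
  refine Fin.succAboveCases i ?_ (fun j => ?_) k
  · simp [Fin.insertNth_apply_same, Fin.cycleRange_self]
  · simp [Fin.insertNth_apply_succAbove, Fin.cycleRange_succAbove]

lemma psi_insertNth {Ψ : (Fin (N+1) → Fin d) → ℂ} (hA : Antisym (N+1) d Ψ)
    (i : Fin (N+1)) (a : Fin d) (h : Fin N → Fin d) :
    Ψ (Fin.insertNth i a h) = (-1 : ℂ) ^ (i : ℕ) * Ψ (Fin.cons a h) := by
  rw [insertNth_eq_comp, hA (Fin.cycleRange i) (Fin.cons a h), Fin.sign_cycleRange]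
  norm_cast

lemma update_eq_insertNth (f : Fin (N+1) → Fin d) (i : Fin (N+1)) (a : Fin d) :
    Function.update f i a = Fin.insertNth i a (fun j => f (i.succAbove j)) := by
  funext k
  refine Fin.succAboveCases i ?_ (fun j => ?_) k
  · simp
  · rw [Fin.insertNth_apply_succAbove, Function.update_of_ne (Fin.succAbove_ne i j)]
/-- `K = a†(u) a(u)` in first-quantized coordinates. -/
noncomputable def Kop (u : Fin d → ℂ) (X : (Fin (N+1) → Fin d) → ℂ) :
    (Fin (N+1) → Fin d) → ℂ :=
  fun f => ∑ i, u (f i) * ∑ a, (starRingEnd ℂ) (u a) * X (Function.update f i a)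

/-- Canonical quadratic form. -/
noncomputable def Rq (Ψ : (Fin (N+1) → Fin d) → ℂ) (w : Fin d → ℂ) : ℂ :=
  ∑ i : Fin (N+1), ∑ h : Fin N → Fin d,
    (∑ a, (starRingEnd ℂ) (w a) * Ψ (Fin.insertNth i a h)) *
    (∑ b, w b * (starRingEnd ℂ) (Ψ (Fin.insertNth i b h)))

lemma kform (Ψ : (Fin (N+1) → Fin d) → ℂ) (w : Fin d → ℂ) :
    ∑ f, (starRingEnd ℂ) (Ψ f) * Kop w Ψ f = Rq Ψ w := by
  unfold Kop Rq
  simp only [Finset.mul_sum]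
  rw [Finset.sum_comm]
  refine Finset.sum_congr rfl fun i _ => ?_
  rw [sum_insertNth i]
  rw [Finset.sum_comm]
  refine Finset.sum_congr rfl fun h _ => ?_
  simp only [Fin.update_insertNth, Fin.insertNth_apply_same]
  refine Finset.sum_congr rfl fun b _ => ?_
  rw [Finset.sum_mul]
  refine Finset.sum_congr rfl fun a _ => ?_
  ring

lemma rayleigh (Ψ : (Fin (N+1) → Fin d) → ℂ) (w : Fin d → ℂ) :
    ∑ a, (starRingEnd ℂ) (w a) * (rdm1 (N+1) d Ψ).mulVec w a = Rq Ψ w := by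
  unfold rdm1 Rq
  simp only [Matrix.mulVec, dotProduct, Matrix.of_apply, Finset.sum_mul, Finset.mul_sum,
    ite_mul, mul_ite, zero_mul, mul_zero, ite_mul]
  conv_lhs =>
    enter [2, a]
    rw [Finset.sum_comm]
    enter [2, i]
    rw [Finset.sum_comm]
    enter [2, f]
    rw [Finset.sum_ite_eq]
  simp only [Finset.mem_univ, if_true]
  rw [Finset.sum_comm]
  conv_lhs =>
    enter [2, i]
    rw [Finset.sum_comm]
    rw [sum_insertNth i]
    rw [Finset.sum_comm]
  simp only [Fin.update_insertNth, Fin.insertNth_apply_same]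
  refine Finset.sum_congr rfl fun i _ => Finset.sum_congr rfl fun h _ =>
    Finset.sum_congr rfl fun b _ => Finset.sum_congr rfl fun a _ => by ring


lemma dsum_zero {Ψ : (Fin (N+1) → Fin d) → ℂ} (hA : Antisym (N+1) d Ψ)
    {i j : Fin (N+1)} (hij : i ≠ j) (u : Fin d → ℂ) (f : Fin (N+1) → Fin d) :
    ∑ a, ∑ b, (starRingEnd ℂ) (u a) * (starRingEnd ℂ) (u b)
      * Ψ (Function.update (Function.update f i a) j b) = 0 := by
  have h : (∑ a, ∑ b, (starRingEnd ℂ) (u a) * (starRingEnd ℂ) (u b)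
      * Ψ (Function.update (Function.update f i a) j b))
      = -∑ a, ∑ b, (starRingEnd ℂ) (u a) * (starRingEnd ℂ) (u b)
      * Ψ (Function.update (Function.update f i a) j b) := by
    conv_lhs => enter [2, a, 2, b]; rw [swap2 hA hij f a b]
    simp only [mul_neg, Finset.sum_neg_distrib]
    congr 1
    rw [Finset.sum_comm]
    exact Finset.sum_congr rfl fun x _ => Finset.sum_congr rfl fun y _ => by ring
  have h2 : (∑ a, ∑ b, (starRingEnd ℂ) (u a) * (starRingEnd ℂ) (u b)
      * Ψ (Function.update (Function.update f i a) j b))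
      + (∑ a, ∑ b, (starRingEnd ℂ) (u a) * (starRingEnd ℂ) (u b)
      * Ψ (Function.update (Function.update f i a) j b)) = 0 := by
    nth_rewrite 2 [h]; ring
  exact add_self_eq_zero.mp h2

lemma cons_comp_perm (σ : Equiv.Perm (Fin N)) (a : Fin d) (g : Fin N → Fin d) :
    Fin.cons a (g ∘ ⇑σ) = Fin.cons a g ∘ ⇑(Equiv.Perm.decomposeFin.symm (0, σ)) := by
  funext k
  refine Fin.cases ?_ (fun j => ?_) k
  · simp [Equiv.Perm.decomposeFin_symm_apply_zero]
  · simp [Equiv.Perm.decomposeFin_symm_apply_succ]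

lemma cons_swap {Ψ : (Fin (N+1) → Fin d) → ℂ} (hA : Antisym (N+1) d Ψ)
    (g : Fin N → Fin d) (i : Fin N) (a b : Fin d) :
    Ψ (Fin.cons b (Function.update g i a)) = -Ψ (Fin.cons a (Function.update g i b)) := by
  have key : Fin.cons a (Function.update g i b) ∘ ⇑(Equiv.swap 0 i.succ)
      = Fin.cons b (Function.update g i a) := by
    funext k
    refine Fin.cases ?_ (fun j => ?_) k
    · rw [Function.comp_apply, Equiv.swap_apply_left, Fin.cons_succ, Function.update_self,
        Fin.cons_zero]
    · rcases eq_or_ne j i with rfl | hj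
      · rw [Function.comp_apply, Equiv.swap_apply_right, Fin.cons_zero, Fin.cons_succ,
          Function.update_self]
      · rw [Function.comp_apply,
          Equiv.swap_apply_of_ne_of_ne (Fin.succ_ne_zero j) (Fin.succ_injective N |>.ne hj),
          Fin.cons_succ, Fin.cons_succ, Function.update_of_ne hj, Function.update_of_ne hj]
  have h2 := hA (Equiv.swap 0 i.succ) (Fin.cons a (Function.update g i b))
  rw [key, Equiv.Perm.sign_swap (Fin.succ_ne_zero i).symm] at h2
  rw [h2]; push_cast; ring

lemma KK {Ψ : (Fin (N+1) → Fin d) → ℂ} (hA : Antisym (N+1) d Ψ) {u : Fin d → ℂ}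
    (hu1 : ∑ a, (starRingEnd ℂ) (u a) * u a = 1) (f : Fin (N+1) → Fin d) :
    Kop u (Kop u Ψ) f = Kop u Ψ f := by
  unfold Kop
  refine Finset.sum_congr rfl fun i _ => ?_
  congr 1
  have split : ∀ a : Fin d,
      (∑ j, u (Function.update f i a j)
        * ∑ b, (starRingEnd ℂ) (u b) * Ψ (Function.update (Function.update f i a) j b))
      = u a * (∑ b, (starRingEnd ℂ) (u b) * Ψ (Function.update f i b))
        + ∑ j ∈ univ.erase i, u (f j)
            * ∑ b, (starRingEnd ℂ) (u b) * Ψ (Function.update (Function.update f i a) j b) := by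
    intro a
    rw [← Finset.add_sum_erase _ _ (Finset.mem_univ i)]
    congr 1
    · rw [Function.update_self]
      congr 1
      exact Finset.sum_congr rfl fun b _ => by rw [Function.update_idem]
    · refine Finset.sum_congr rfl fun j hj => ?_
      rw [Function.update_of_ne (Finset.mem_erase.1 hj).1]
  calc ∑ a, (starRingEnd ℂ) (u a)
        * ∑ j, u (Function.update f i a j)
          * ∑ b, (starRingEnd ℂ) (u b) * Ψ (Function.update (Function.update f i a) j b)
      = ∑ a, ((starRingEnd ℂ) (u a)
            * (u a * ∑ b, (starRingEnd ℂ) (u b) * Ψ (Function.update f i b))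
          + (starRingEnd ℂ) (u a) * ∑ j ∈ univ.erase i, u (f j)
            * ∑ b, (starRingEnd ℂ) (u b) * Ψ (Function.update (Function.update f i a) j b)) := by
        refine Finset.sum_congr rfl fun a _ => ?_
        rw [split a, mul_add]
    _ = (∑ a, (starRingEnd ℂ) (u a) * u a)
          * (∑ b, (starRingEnd ℂ) (u b) * Ψ (Function.update f i b))
        + ∑ j ∈ univ.erase i, ∑ a, (starRingEnd ℂ) (u a) * (u (f j)
            * ∑ b, (starRingEnd ℂ) (u b) * Ψ (Function.update (Function.update f i a) j b)) := by
        rw [Finset.sum_add_distrib]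
        congr 1
        · rw [Finset.sum_mul]
          exact Finset.sum_congr rfl fun a _ => by ring
        · conv_lhs => enter [2, a]; rw [Finset.mul_sum]
          exact Finset.sum_comm
    _ = ∑ b, (starRingEnd ℂ) (u b) * Ψ (Function.update f i b) := by
        rw [hu1, one_mul]
        have hz : ∀ j ∈ univ.erase i, (∑ a, (starRingEnd ℂ) (u a) * (u (f j)
            * ∑ b, (starRingEnd ℂ) (u b) * Ψ (Function.update (Function.update f i a) j b))) = 0 := by
          intro j hj
          have hij : i ≠ j := ((Finset.mem_erase.1 hj).1).symm
          have hz0 := dsum_zero hA hij u f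
          calc ∑ a, (starRingEnd ℂ) (u a) * (u (f j)
                * ∑ b, (starRingEnd ℂ) (u b) * Ψ (Function.update (Function.update f i a) j b))
              = u (f j) * ∑ a, ∑ b, (starRingEnd ℂ) (u a) * (starRingEnd ℂ) (u b)
                * Ψ (Function.update (Function.update f i a) j b) := by
                rw [Finset.mul_sum]
                refine Finset.sum_congr rfl fun a _ => ?_
                rw [Finset.mul_sum, Finset.mul_sum, Finset.mul_sum]
                exact Finset.sum_congr rfl fun b _ => by ring
            _ = 0 := by rw [hz0, mul_zero]
        rw [Finset.sum_eq_zero hz, add_zero]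

lemma Kadj (u : Fin d → ℂ) (X Y : (Fin (N+1) → Fin d) → ℂ) :
    ∑ f, (starRingEnd ℂ) (Kop u X f) * Y f = ∑ f, (starRingEnd ℂ) (X f) * Kop u Y f := by
  unfold Kop
  trans ∑ i : Fin (N+1), ∑ h : Fin N → Fin d,
      (∑ a, u a * (starRingEnd ℂ) (X (Fin.insertNth i a h))) *
      (∑ b, (starRingEnd ℂ) (u b) * Y (Fin.insertNth i b h))
  · simp only [map_sum, map_mul, Complex.conj_conj, Finset.sum_mul]
    rw [Finset.sum_comm]
    refine Finset.sum_congr rfl fun i _ => ?_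
    rw [sum_insertNth i, Finset.sum_comm]
    refine Finset.sum_congr rfl fun h _ => ?_
    simp only [Fin.update_insertNth, Fin.insertNth_apply_same]
    conv_lhs =>
      enter [2, b]
      rw [mul_comm ((starRingEnd ℂ) (u b)) _, mul_assoc, Finset.sum_mul]
    rw [Finset.sum_comm]
    refine Finset.sum_congr rfl fun a _ => ?_
    rw [Finset.mul_sum]
  · symm
    simp only [Finset.mul_sum]
    rw [Finset.sum_comm]
    refine Finset.sum_congr rfl fun i _ => ?_
    rw [sum_insertNth i, Finset.sum_comm]
    refine Finset.sum_congr rfl fun h _ => ?_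
    simp only [Fin.update_insertNth, Fin.insertNth_apply_same]
    rw [Finset.sum_comm]
    refine Finset.sum_congr rfl fun b _ => ?_
    rw [Finset.sum_mul]
    exact Finset.sum_congr rfl fun a _ => by ring
lemma quad (Ψ : (Fin (N+1) → Fin d) → ℂ) (w : Fin d → ℂ) :
    Rq Ψ w = ∑ i : Fin (N+1), ∑ h : Fin N → Fin d,
      ((Complex.normSq (∑ a, (starRingEnd ℂ) (w a) * Ψ (Fin.insertNth i a h)) : ℝ) : ℂ) := by
  unfold Rq
  refine Finset.sum_congr rfl fun i _ => Finset.sum_congr rfl fun h _ => ?_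
  have hc : (∑ b, w b * (starRingEnd ℂ) (Ψ (Fin.insertNth i b h)))
      = (starRingEnd ℂ) (∑ a, (starRingEnd ℂ) (w a) * Ψ (Fin.insertNth i a h)) := by
    rw [map_sum]
    exact Finset.sum_congr rfl fun a _ => by rw [map_mul, Complex.conj_conj]
  rw [hc, Complex.mul_conj]

end SlaterAux

/-- For a normalized `Ψ ∈ Λ^{N+1} ℂ^d`: if `u` is a normalized eigenvector
of `γ₁^Ψ` with eigenvalue `1`, then `Ψ = u ∧ Φ` for a normalized `Φ ∈ Λ^N` of the orthogonal
complement of `u` (all contractions of `Φ` with `u` vanish); and if `v` is an eigenvector of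
`γ₁^Ψ` with eigenvalue `0`, then `Ψ` lies in `Λ^{N+1}` of the orthogonal complement of `v`. -/
theorem slater_split_of_extremal_eigenvalue (N d : ℕ) (Ψ : (Fin (N + 1) → Fin d) → ℂ)
    (hA : Antisym (N + 1) d Ψ)
    (hnorm : ∑ f : Fin (N + 1) → Fin d, Complex.normSq (Ψ f) = 1) :
    (∀ u : Fin d → ℂ, (∑ a, Complex.normSq (u a)) = 1 →
      (rdm1 (N + 1) d Ψ).mulVec u = u →
      ∃ Φ : (Fin N → Fin d) → ℂ, Antisym N d Φ ∧
        (∑ g : Fin N → Fin d, Complex.normSq (Φ g)) = 1 ∧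
        Ψ = wedge1 N d u Φ ∧
        ∀ (g : Fin N → Fin d) (i : Fin N),
          ∑ a, (starRingEnd ℂ) (u a) * Φ (Function.update g i a) = 0) ∧
    (∀ v : Fin d → ℂ, v ≠ 0 → (rdm1 (N + 1) d Ψ).mulVec v = 0 →
      ∀ (f : Fin (N + 1) → Fin d) (i : Fin (N + 1)),
        ∑ a, (starRingEnd ℂ) (v a) * Ψ (Function.update f i a) = 0) := by
  
  constructor
  · intro u hu hev
    have hu1 : ∑ a, (starRingEnd ℂ) (u a) * u a = 1 := by
      have h1 : ∀ a : Fin d, (starRingEnd ℂ) (u a) * u a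
          = ((Complex.normSq (u a) : ℝ) : ℂ) := fun a => by rw [mul_comm, Complex.mul_conj]
      rw [Finset.sum_congr rfl fun a _ => h1 a, ← Complex.ofReal_sum, hu, Complex.ofReal_one]
    have hR : Rq Ψ u = 1 := by
      rw [← rayleigh]
      calc ∑ a, (starRingEnd ℂ) (u a) * (rdm1 (N+1) d Ψ).mulVec u a
          = ∑ a, (starRingEnd ℂ) (u a) * u a := by rw [hev]
        _ = 1 := hu1
    have hA1 : ∑ f, (starRingEnd ℂ) (Ψ f) * Kop u Ψ f = 1 := by rw [kform]; exact hR
    have hN : ∑ f, (starRingEnd ℂ) (Ψ f) * Ψ f = 1 := by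
      have h1 : ∀ f : Fin (N+1) → Fin d, (starRingEnd ℂ) (Ψ f) * Ψ f
          = ((Complex.normSq (Ψ f) : ℝ) : ℂ) := fun f => by rw [mul_comm, Complex.mul_conj]
      rw [Finset.sum_congr rfl fun f _ => h1 f, ← Complex.ofReal_sum, hnorm, Complex.ofReal_one]
    have hC : ∑ f, (starRingEnd ℂ) (Kop u Ψ f) * Kop u Ψ f = 1 := by
      rw [Kadj]
      calc ∑ f, (starRingEnd ℂ) (Ψ f) * Kop u (Kop u Ψ) f
          = ∑ f, (starRingEnd ℂ) (Ψ f) * Kop u Ψ f :=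
            Finset.sum_congr rfl fun f _ => by rw [KK hA hu1 f]
        _ = 1 := hA1
    have hB : ∑ f, (starRingEnd ℂ) (Kop u Ψ f) * Ψ f = 1 := by rw [Kadj]; exact hA1
    have hD : ∀ f, Ψ f = Kop u Ψ f := by
      have expand : ∀ f : Fin (N+1) → Fin d, ((Complex.normSq (Ψ f - Kop u Ψ f) : ℝ) : ℂ)
          = (starRingEnd ℂ) (Ψ f) * Ψ f - (starRingEnd ℂ) (Ψ f) * Kop u Ψ f
            - (starRingEnd ℂ) (Kop u Ψ f) * Ψ f
            + (starRingEnd ℂ) (Kop u Ψ f) * Kop u Ψ f := by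
        intro f
        rw [← Complex.mul_conj, map_sub]; ring
      have hsum : ∑ f, ((Complex.normSq (Ψ f - Kop u Ψ f) : ℝ) : ℂ) = 0 := by
        rw [Finset.sum_congr rfl fun f _ => expand f]
        simp only [Finset.sum_add_distrib, Finset.sum_sub_distrib]
        rw [hN, hA1, hB, hC]; ring
      have hreal : ∑ f, Complex.normSq (Ψ f - Kop u Ψ f) = 0 := by
        rw [← Complex.ofReal_sum] at hsum; exact_mod_cast hsum
      intro f
      have hz : Complex.normSq (Ψ f - Kop u Ψ f) = 0 :=
        (Finset.sum_eq_zero_iff_of_nonneg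
          (fun f _ => Complex.normSq_nonneg _)).mp hreal f (Finset.mem_univ f)
      exact sub_eq_zero.mp (Complex.normSq_eq_zero.mp hz)
    refine ⟨fun g => ((Real.sqrt (N + 1) : ℝ) : ℂ)
        * ∑ a, (starRingEnd ℂ) (u a) * Ψ (Fin.cons a g), ?_, ?_, ?_, ?_⟩
    · -- Antisym
      intro σ g
      have hterm : ∀ a, Ψ (Fin.cons a (g ∘ ⇑σ))
          = ((Equiv.Perm.sign σ : ℤ) : ℂ) * Ψ (Fin.cons a g) := by
        intro a
        rw [cons_comp_perm σ a g, hA (Equiv.Perm.decomposeFin.symm (0, σ)) (Fin.cons a g),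
          Equiv.Perm.decomposeFin.symm_sign]
        simp
      have h2 : (∑ a, (starRingEnd ℂ) (u a) * Ψ (Fin.cons a (g ∘ ⇑σ)))
          = ((Equiv.Perm.sign σ : ℤ) : ℂ) * ∑ a, (starRingEnd ℂ) (u a) * Ψ (Fin.cons a g) := by
        rw [Finset.mul_sum]
        exact Finset.sum_congr rfl fun a _ => by rw [hterm a]; ring
      show ((Real.sqrt (N + 1) : ℝ) : ℂ) * ∑ a, (starRingEnd ℂ) (u a) * Ψ (Fin.cons a (g ∘ ⇑σ))
          = _
      rw [h2]; ring
    · -- normalization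
      have hq : ∑ i : Fin (N+1), ∑ h : Fin N → Fin d,
          ((Complex.normSq (∑ a, (starRingEnd ℂ) (u a) * Ψ (Fin.insertNth i a h)) : ℝ) : ℂ)
          = 1 := by rw [← quad]; exact hR
      have hterm : ∀ (i : Fin (N+1)) (h : Fin N → Fin d),
          Complex.normSq (∑ a, (starRingEnd ℂ) (u a) * Ψ (Fin.insertNth i a h))
          = Complex.normSq (∑ a, (starRingEnd ℂ) (u a) * Ψ (Fin.cons a h)) := by
        intro i h
        have h1 : (∑ a, (starRingEnd ℂ) (u a) * Ψ (Fin.insertNth i a h))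
            = (-1 : ℂ) ^ (i : ℕ) * ∑ a, (starRingEnd ℂ) (u a) * Ψ (Fin.cons a h) := by
          rw [Finset.mul_sum]
          exact Finset.sum_congr rfl fun a _ => by rw [psi_insertNth hA]; ring
        rw [h1, Complex.normSq_mul, map_pow, Complex.normSq_neg,
          Complex.normSq_one, one_pow, one_mul]
      have hq2 : ((((N : ℝ) + 1) * ∑ h : Fin N → Fin d,
          Complex.normSq (∑ a, (starRingEnd ℂ) (u a) * Ψ (Fin.cons a h)) : ℝ) : ℂ) = 1 := by
        rw [← hq]
        rw [Finset.sum_congr rfl fun i _ => Finset.sum_congr rfl fun h _ => by rw [hterm i h]]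
        rw [Finset.sum_const, Finset.card_univ, Fintype.card_fin]
        push_cast
        rw [nsmul_eq_mul]
        push_cast
        ring
      have hreal : ((N : ℝ) + 1) * ∑ h : Fin N → Fin d,
          Complex.normSq (∑ a, (starRingEnd ℂ) (u a) * Ψ (Fin.cons a h)) = 1 := by
        exact_mod_cast hq2
      have hterm2 : ∀ g : Fin N → Fin d,
          Complex.normSq (((Real.sqrt (N + 1) : ℝ) : ℂ)
            * ∑ a, (starRingEnd ℂ) (u a) * Ψ (Fin.cons a g))
          = ((N : ℝ) + 1) * Complex.normSq (∑ a, (starRingEnd ℂ) (u a) * Ψ (Fin.cons a g)) := by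
        intro g
        rw [Complex.normSq_mul, Complex.normSq_ofReal,
          Real.mul_self_sqrt (by positivity : (0:ℝ) ≤ (N : ℝ) + 1)]
      rw [Finset.sum_congr rfl fun g _ => hterm2 g, ← Finset.mul_sum, hreal]
    · -- wedge identity
      funext f
      rw [hD f]
      show Kop u Ψ f = wedge1 N d u _ f
      unfold Kop wedge1
      have hsq : ((Real.sqrt (N + 1) : ℝ) : ℂ) ≠ 0 := by
        rw [Complex.ofReal_ne_zero]
        positivity
      rw [Finset.mul_sum]
      refine Finset.sum_congr rfl fun i _ => ?_
      have h1 : ∑ a, (starRingEnd ℂ) (u a) * Ψ (Function.update f i a)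
          = (-1 : ℂ) ^ (i : ℕ)
            * ∑ a, (starRingEnd ℂ) (u a) * Ψ (Fin.cons a fun j => f (i.succAbove j)) := by
        rw [Finset.mul_sum]
        refine Finset.sum_congr rfl fun a _ => ?_
        rw [update_eq_insertNth, psi_insertNth hA]; ring
      rw [h1]
      have h2 : (((Real.sqrt (N + 1) : ℝ) : ℂ))⁻¹
          * ((-1 : ℂ) ^ (i : ℕ) * u (f i) * (((Real.sqrt (N + 1) : ℝ) : ℂ)
            * ∑ a, (starRingEnd ℂ) (u a) * Ψ (Fin.cons a fun j => f (i.succAbove j))))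
          = ((((Real.sqrt (N + 1) : ℝ) : ℂ))⁻¹ * ((Real.sqrt (N + 1) : ℝ) : ℂ))
            * ((-1 : ℂ) ^ (i : ℕ) * u (f i)
              * ∑ a, (starRingEnd ℂ) (u a) * Ψ (Fin.cons a fun j => f (i.succAbove j))) := by
        ring
      rw [h2, inv_mul_cancel₀ hsq, one_mul]
      ring
    · -- contractions vanish
      intro g i
      have hz : ∑ a, ∑ b, (starRingEnd ℂ) (u a)
          * ((starRingEnd ℂ) (u b) * Ψ (Fin.cons b (Function.update g i a))) = 0 := by
        have h : (∑ a, ∑ b, (starRingEnd ℂ) (u a)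
            * ((starRingEnd ℂ) (u b) * Ψ (Fin.cons b (Function.update g i a))))
            = -∑ a, ∑ b, (starRingEnd ℂ) (u a)
            * ((starRingEnd ℂ) (u b) * Ψ (Fin.cons b (Function.update g i a))) := by
          conv_lhs => enter [2, a, 2, b]; rw [cons_swap hA g i a b]
          simp only [mul_neg, Finset.sum_neg_distrib]
          congr 1
          rw [Finset.sum_comm]
          exact Finset.sum_congr rfl fun x _ => Finset.sum_congr rfl fun y _ => by ring
        have h2 : (∑ a, ∑ b, (starRingEnd ℂ) (u a)
            * ((starRingEnd ℂ) (u b) * Ψ (Fin.cons b (Function.update g i a))))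
            + (∑ a, ∑ b, (starRingEnd ℂ) (u a)
            * ((starRingEnd ℂ) (u b) * Ψ (Fin.cons b (Function.update g i a)))) = 0 := by
          nth_rewrite 2 [h]; ring
        exact add_self_eq_zero.mp h2
      calc ∑ a, (starRingEnd ℂ) (u a) * (((Real.sqrt (N + 1) : ℝ) : ℂ)
            * ∑ b, (starRingEnd ℂ) (u b) * Ψ (Fin.cons b (Function.update g i a)))
          = ((Real.sqrt (N + 1) : ℝ) : ℂ) * ∑ a, ∑ b, (starRingEnd ℂ) (u a)
            * ((starRingEnd ℂ) (u b) * Ψ (Fin.cons b (Function.update g i a))) := by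
            rw [Finset.mul_sum]
            refine Finset.sum_congr rfl fun a _ => ?_
            rw [Finset.mul_sum, Finset.mul_sum, Finset.mul_sum]
            exact Finset.sum_congr rfl fun b _ => by ring
        _ = 0 := by rw [hz, mul_zero]
  · intro v _hv0 hev f i
    have hR : Rq Ψ v = 0 := by
      rw [← rayleigh]
      have h0 : ∀ a : Fin d, (rdm1 (N+1) d Ψ).mulVec v a = 0 := fun a => by rw [hev]; rfl
      simp [h0]
    have hq : ∑ i' : Fin (N+1), ∑ h : Fin N → Fin d,
        Complex.normSq (∑ a, (starRingEnd ℂ) (v a) * Ψ (Fin.insertNth i' a h)) = 0 := by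
      have h1 : ((∑ i' : Fin (N+1), ∑ h : Fin N → Fin d,
          Complex.normSq (∑ a, (starRingEnd ℂ) (v a) * Ψ (Fin.insertNth i' a h)) : ℝ) : ℂ)
          = 0 := by
        push_cast
        rw [← quad Ψ v]
        exact hR
      exact_mod_cast h1
    have hzero := (Finset.sum_eq_zero_iff_of_nonneg
      (fun i' _ => Finset.sum_nonneg fun h _ => Complex.normSq_nonneg _)).mp hq i
      (Finset.mem_univ i)
    have hzero2 := (Finset.sum_eq_zero_iff_of_nonneg
      (fun h _ => Complex.normSq_nonneg _)).mp hzero (fun j => f (i.succAbove j))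
      (Finset.mem_univ _)
    have hz3 : (∑ a, (starRingEnd ℂ) (v a)
        * Ψ (Fin.insertNth i a fun j => f (i.succAbove j))) = 0 :=
      Complex.normSq_eq_zero.mp hzero2
    calc ∑ a, (starRingEnd ℂ) (v a) * Ψ (Function.update f i a)
        = ∑ a, (starRingEnd ℂ) (v a) * Ψ (Fin.insertNth i a fun j => f (i.succAbove j)) :=
          Finset.sum_congr rfl fun a _ => by rw [update_eq_insertNth]
      _ = 0 := hz3
end

section
/- Volume-ratio bound: for integers 8 ≤ N ≤ d/2 with d large enough that d((N−1)/N)^{d−1} ≤ 1, and for any integer 1 ≤ m ≤ N−7 with t = (N−m+1)/(N−m+9), the following inequality of volumes holds: Vol^{d−1}({λ ∈ [0,1]^d : λ_{[m]} ≤ t, ∑λᵢ = N}) / Vol^{d−1}({λ ∈ [0,1]^d : ∑λᵢ = N}) ≥ 1 − C(d,m)·(N − mt)^{d−1} / ((1 − d((N−1)/N)^{d−1}) N^{d−1}), where λ_{[m]} denotes the m-th largest entry. -/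
open Finset MeasureTheory
open scoped ENNReal Pointwise

/-! Let `Δ` be the standard simplex `{x ≥ 0, ∑ x = 1}` in `ℝ^d`. Every set `{x ≥ v, ∑ x = c}`
is a translate of `(c - ∑ v) • Δ`, so its `(d-1)`-dimensional Hausdorff measure is
`(c - ∑ v)^(d-1) · μH(Δ)`; and `0 < μH(Δ) < ∞` because `Δ` is a translate of the image of the
solid simplex of `ℝ^(d-1)` under an injective linear map.

The simplex `N • Δ` is covered by the slice `{x ∈ [0,1]^d, ∑ x = N}` and the `d` sets
`{x ≥ eᵢ, ∑ x = N}`, which bounds the slice from below by `(N^(d-1) - d (N-1)^(d-1)) μH(Δ)`;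
this is positive because `d ((N-1)/N)^(d-1) ≤ 1` and equality is excluded by
`gcd(N-1, N) = 1`. A point of the slice with at least `m` coordinates `> t` lies in one of the
`C(d,m)` sets `{x ≥ t·1_T, ∑ x = N}` with `|T| = m`. In the ratio `μH(Δ)` cancels. -/

section Simplex

variable {ι : Type*} [Fintype ι]

def simplexAbove (v : EuclideanSpace ℝ ι) (c : ℝ) : Set (EuclideanSpace ℝ ι) :=
  {x | (∀ i, v i ≤ x i) ∧ ∑ i, x i = c}

theorem simplexAbove_eq_vadd_smul {v : EuclideanSpace ℝ ι} {r c : ℝ} (hr : 0 < r)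
    (hc : ∑ i, v i + r = c) : simplexAbove v c = v +ᵥ r • simplexAbove 0 1 := by
  ext x
  rw [Set.mem_vadd_set_iff_neg_vadd_mem, Set.mem_smul_set_iff_inv_smul_mem₀ hr.ne']
  simp only [simplexAbove, Set.mem_ofPred_eq, vadd_eq_add, PiLp.smul_apply, PiLp.add_apply,
    PiLp.neg_apply, PiLp.zero_apply, smul_eq_mul, ← mul_sum, sum_add_distrib, sum_neg_distrib]
  have hx : ∀ i, (0 ≤ r⁻¹ * (-v i + x i) ↔ v i ≤ x i) := fun i => by
    rw [mul_nonneg_iff_of_pos_left (inv_pos.2 hr)]; constructor <;> intro h <;> linarith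
  simp only [hx, inv_mul_eq_one₀ hr.ne']
  constructor <;> rintro ⟨h1, h2⟩ <;> exact ⟨h1, by linarith⟩

theorem hausdorffMeasure_simplexAbove {s : ℝ} (hs : 0 ≤ s) {v : EuclideanSpace ℝ ι} {r c : ℝ}
    (hr : 0 < r) (hc : ∑ i, v i + r = c) :
    μH[s] (simplexAbove v c) =
      ENNReal.ofReal (r ^ s) * μH[s] (simplexAbove (0 : EuclideanSpace ℝ ι) 1) := by
  rw [simplexAbove_eq_vadd_smul hr hc, hausdorffMeasure_vadd _ (Or.inl hs),
    Measure.hausdorffMeasure_smul₀ hs hr.ne', ENNReal.smul_def, smul_eq_mul,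
    ENNReal.coe_rpow_of_nonneg _ hs, ← ENNReal.ofReal_rpow_of_nonneg hr.le hs,
    ← Real.toNNReal_eq_nnnorm_of_nonneg hr.le]
  rfl

theorem simplexAbove_zero_eq_union (c : ℝ) :
    simplexAbove (0 : EuclideanSpace ℝ ι) c =
      {x | (∀ i, x i ∈ Set.Icc (0 : ℝ) 1) ∧ ∑ i, x i = c} ∪
        {x | (∀ i, 0 ≤ x i) ∧ (∃ i, 1 < x i) ∧ ∑ i, x i = c} := by
  ext x
  simp only [simplexAbove, Set.mem_union, Set.mem_ofPred_eq, PiLp.zero_apply, Set.mem_Icc]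
  constructor
  · rintro ⟨h0, hx⟩
    by_cases h1 : ∃ i, 1 < x i
    · exact .inr ⟨h0, h1, hx⟩
    · exact .inl ⟨fun i => ⟨h0 i, not_lt.1 fun h => h1 ⟨i, h⟩⟩, hx⟩
  · rintro (⟨h01, hx⟩ | ⟨h0, -, hx⟩)
    · exact ⟨fun i => (h01 i).1, hx⟩
    · exact ⟨h0, hx⟩

end Simplex

section LinearImage

variable {ι F : Type*} [Fintype ι] [NormedAddCommGroup F] [NormedSpace ℝ F] [MeasurableSpace F]
  [BorelSpace F] (L : (ι → ℝ) →ₗ[ℝ] F) {s : Set (ι → ℝ)}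

theorem hausdorffMeasure_linearMap_image_lt_top (hs : volume s < ∞) :
    μH[Fintype.card ι] (L '' s) < ∞ := by
  have h := (LinearMap.toContinuousLinearMap L).lipschitz.hausdorffMeasure_image_le
    (Nat.cast_nonneg (Fintype.card ι)) s
  rw [hausdorffMeasure_pi_real] at h
  exact h.trans_lt (ENNReal.mul_lt_top (by simp) hs)

theorem hausdorffMeasure_linearMap_image_pos (hL : Function.Injective L) (hs : 0 < volume s) :
    0 < μH[Fintype.card ι] (L '' s) := by
  obtain ⟨K, -, hK⟩ := L.exists_antilipschitzWith (LinearMap.ker_eq_bot.2 hL)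
  have h := hK.le_hausdorffMeasure_image (Nat.cast_nonneg (Fintype.card ι)) s
  rw [hausdorffMeasure_pi_real] at h
  exact pos_of_ne_zero fun h0 => hs.ne' (by simpa [h0] using h)

end LinearImage

def solidSimplex (ι : Type*) [Fintype ι] : Set (ι → ℝ) := {y | (∀ j, 0 ≤ y j) ∧ ∑ j, y j ≤ 1}

theorem volume_solidSimplex_lt_top (ι : Type*) [Fintype ι] : volume (solidSimplex ι) < ∞ := by
  refine (measure_mono fun y hy => ?_).trans_lt (measure_Icc_lt_top (a := 0) (b := 1))
  exact ⟨hy.1, fun j => (single_le_sum (fun i _ => hy.1 i) (mem_univ j)).trans hy.2⟩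

theorem volume_solidSimplex_pos (ι : Type*) [Fintype ι] : 0 < volume (solidSimplex ι) := by
  set ε : ℝ := 1 / (Fintype.card ι + 1)
  have hε : 0 < ε := by positivity
  have hbox : Set.univ.pi (fun _ => Set.Ioo 0 ε) ⊆ solidSimplex ι := fun y hy => by
    refine ⟨fun j => (hy j trivial).1.le, ?_⟩
    calc ∑ j, y j ≤ ∑ _j : ι, ε := sum_le_sum fun j _ => (hy j trivial).2.le
      _ ≤ 1 := by
        simp only [sum_const, card_univ, nsmul_eq_mul, ε]
        rw [mul_one_div, div_le_one (by positivity)]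
        linarith
  refine lt_of_lt_of_le ?_ (measure_mono hbox)
  exact (isOpen_set_pi Set.finite_univ fun _ _ => isOpen_Ioo).measure_pos volume
    ⟨fun _ => ε / 2, fun _ _ => ⟨by positivity, by linarith⟩⟩

def snocNegSum (k : ℕ) : (Fin k → ℝ) →ₗ[ℝ] EuclideanSpace ℝ (Fin (k + 1)) where
  toFun y := WithLp.toLp 2 (Fin.snoc y (-∑ j, y j))
  map_add' y z := by
    ext i
    induction i using Fin.lastCases <;> simp [sum_add_distrib, add_comm]
  map_smul' c y := by
    ext i
    induction i using Fin.lastCases <;> simp [mul_sum]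

@[simp] theorem snocNegSum_castSucc (k : ℕ) (y : Fin k → ℝ) (j : Fin k) :
    snocNegSum k y j.castSucc = y j := by simp [snocNegSum]

@[simp] theorem snocNegSum_last (k : ℕ) (y : Fin k → ℝ) :
    snocNegSum k y (Fin.last k) = -∑ j, y j := by simp [snocNegSum]

theorem snocNegSum_injective (k : ℕ) : Function.Injective (snocNegSum k) := fun y z h => by
  funext j
  simpa using congrArg (fun x : EuclideanSpace ℝ (Fin (k + 1)) => x j.castSucc) h

theorem simplexAbove_zero_one_eq (k : ℕ) :
    simplexAbove (0 : EuclideanSpace ℝ (Fin (k + 1))) 1 =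
      EuclideanSpace.single (Fin.last k) (1 : ℝ) +ᵥ snocNegSum k '' solidSimplex (Fin k) := by
  ext x
  simp only [simplexAbove, Set.mem_ofPred_eq, PiLp.zero_apply, Set.mem_vadd_set, Set.mem_image,
    solidSimplex, Fin.sum_univ_castSucc]
  constructor
  · rintro ⟨hx0, hx1⟩
    refine ⟨_, ⟨fun j => x j.castSucc, ⟨fun j => hx0 _, by linarith [hx0 (Fin.last k)]⟩, rfl⟩, ?_⟩
    ext i
    induction i using Fin.lastCases <;> simp [Fin.castSucc_ne_last]
    linarith
  · rintro ⟨_, ⟨y, ⟨hy0, hy1⟩, rfl⟩, rfl⟩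
    refine ⟨fun i => ?_, by simp⟩
    induction i using Fin.lastCases <;> simp [Fin.castSucc_ne_last, hy0]
    linarith

theorem hausdorffMeasure_stdSimplex_lt_top (k : ℕ) :
    μH[(k : ℝ)] (simplexAbove (0 : EuclideanSpace ℝ (Fin (k + 1))) 1) < ∞ := by
  rw [simplexAbove_zero_one_eq, hausdorffMeasure_vadd _ (Or.inl k.cast_nonneg)]
  simpa using hausdorffMeasure_linearMap_image_lt_top (snocNegSum k) (volume_solidSimplex_lt_top _)

theorem hausdorffMeasure_stdSimplex_pos (k : ℕ) :
    0 < μH[(k : ℝ)] (simplexAbove (0 : EuclideanSpace ℝ (Fin (k + 1))) 1) := by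
  rw [simplexAbove_zero_one_eq, hausdorffMeasure_vadd _ (Or.inl k.cast_nonneg)]
  simpa using hausdorffMeasure_linearMap_image_pos (snocNegSum k) (snocNegSum_injective k)
    (volume_solidSimplex_pos _)

section Counting

variable {ι : Type*} [Fintype ι]

def manyCoordsGt (m : ℕ) (a c : ℝ) : Set (EuclideanSpace ℝ ι) :=
  {x | (∀ i, 0 ≤ x i) ∧ m ≤ #{i | a < x i} ∧ ∑ i, x i = c}

theorem manyCoordsGt_subset_biUnion [DecidableEq ι] (m : ℕ) (a c : ℝ) :
    manyCoordsGt m a c ⊆ ⋃ T ∈ powersetCard m (univ : Finset ι),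
      simplexAbove (WithLp.toLp 2 fun i => if i ∈ T then a else 0) c := by
  rintro x ⟨hx0, hxm, hxc⟩
  obtain ⟨T, hT, rfl⟩ := exists_subset_card_eq hxm
  refine Set.mem_biUnion (mem_powersetCard.2 ⟨subset_univ T, rfl⟩) ⟨fun i => ?_, hxc⟩
  by_cases hi : i ∈ T
  · simpa [hi] using (mem_filter.1 (hT hi)).2.le
  · simpa [hi] using hx0 i

theorem hausdorffMeasure_manyCoordsGt_le {s : ℝ} (hs : 0 ≤ s) {m : ℕ} {a c : ℝ}
    (hr : m * a < c) :
    μH[s] (manyCoordsGt (ι := ι) m a c) ≤ (Fintype.card ι).choose m *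
      (ENNReal.ofReal ((c - m * a) ^ s) * μH[s] (simplexAbove (0 : EuclideanSpace ℝ ι) 1)) := by
  classical
  calc _ ≤ ∑ T ∈ powersetCard m (univ : Finset ι),
        μH[s] (simplexAbove (WithLp.toLp 2 fun i => if i ∈ T then a else 0) c) :=
      (measure_mono (manyCoordsGt_subset_biUnion m a c)).trans (measure_biUnion_finset_le _ _)
    _ = _ := by
      rw [← card_univ, ← card_powersetCard, ← nsmul_eq_mul, ← sum_const]
      refine sum_congr rfl fun T hT => hausdorffMeasure_simplexAbove hs (by linarith) ?_
      simp [(mem_powersetCard.1 hT).2]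

end Counting

section Slice

variable {k : ℕ}

theorem measureReal_simplexAbove_zero {c : ℝ} (hc : 0 < c) :
    (μH[(k : ℝ)]).real (simplexAbove (0 : EuclideanSpace ℝ (Fin (k + 1))) c) =
      c ^ k * (μH[(k : ℝ)]).real (simplexAbove (0 : EuclideanSpace ℝ (Fin (k + 1))) 1) := by
  rw [measureReal_def, hausdorffMeasure_simplexAbove k.cast_nonneg hc (by simp),
    ENNReal.toReal_mul, ENNReal.toReal_ofReal (by positivity), Real.rpow_natCast, measureReal_def]

theorem measureReal_le_of_subset_manyCoordsGt {m : ℕ} {a c : ℝ} (hr : m * a < c)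
    {X : Set (EuclideanSpace ℝ (Fin (k + 1)))} (hX : X ⊆ manyCoordsGt m a c) :
    (μH[(k : ℝ)]).real X ≤ (k + 1).choose m * (c - m * a) ^ k *
      (μH[(k : ℝ)]).real (simplexAbove (0 : EuclideanSpace ℝ (Fin (k + 1))) 1) := by
  have h := (measure_mono hX).trans (hausdorffMeasure_manyCoordsGt_le k.cast_nonneg hr)
  have hfin := (hausdorffMeasure_stdSimplex_lt_top k).ne
  rw [measureReal_def, measureReal_def]
  refine (ENNReal.toReal_mono (by finiteness) h).trans_eq ?_
  rw [ENNReal.toReal_mul, ENNReal.toReal_mul,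
    ENNReal.toReal_ofReal (Real.rpow_nonneg (by linarith) _), Real.rpow_natCast]
  simp [mul_assoc]

theorem measureReal_cubeSlice_ge {c : ℝ} (hc : 1 < c) :
    (c ^ k - (k + 1) * (c - 1) ^ k) *
        (μH[(k : ℝ)]).real (simplexAbove (0 : EuclideanSpace ℝ (Fin (k + 1))) 1) ≤
      (μH[(k : ℝ)]).real
        {x : EuclideanSpace ℝ (Fin (k + 1)) | (∀ i, x i ∈ Set.Icc (0 : ℝ) 1) ∧ ∑ i, x i = c} := by
  have hsplit := (congrArg (μH[(k : ℝ)]).real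
    (simplexAbove_zero_eq_union (ι := Fin (k + 1)) c)).trans_le (measureReal_union_le _ _)
  have hover := measureReal_le_of_subset_manyCoordsGt (m := 1) (a := 1) (by simpa using hc)
    (X := {x : EuclideanSpace ℝ (Fin (k + 1)) | (∀ i, 0 ≤ x i) ∧ (∃ i, 1 < x i) ∧ ∑ i, x i = c})
    fun x ⟨hx0, hx1, hx⟩ => ⟨hx0, one_le_card.2 (hx1.imp fun i hi => by simp [hi]), hx⟩
  rw [measureReal_simplexAbove_zero (by linarith)] at hsplit
  simp only [Nat.choose_one_right, Nat.cast_add, Nat.cast_one, one_mul] at hover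
  linarith

theorem measureReal_cubeSlice_sub_le {m : ℕ} {t c : ℝ} (hmt : m * t < c) :
    (μH[(k : ℝ)]).real
        {x : EuclideanSpace ℝ (Fin (k + 1)) | (∀ i, x i ∈ Set.Icc (0 : ℝ) 1) ∧ ∑ i, x i = c} -
      (μH[(k : ℝ)]).real
        {x : EuclideanSpace ℝ (Fin (k + 1)) | (∀ i, x i ∈ Set.Icc (0 : ℝ) 1) ∧
          #{i | t < x i} < m ∧ ∑ i, x i = c} ≤
      (k + 1).choose m * (c - m * t) ^ k *
        (μH[(k : ℝ)]).real (simplexAbove (0 : EuclideanSpace ℝ (Fin (k + 1))) 1) := by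
  set S := {x : EuclideanSpace ℝ (Fin (k + 1)) | (∀ i, x i ∈ Set.Icc (0 : ℝ) 1) ∧ ∑ i, x i = c}
  set A := {x : EuclideanSpace ℝ (Fin (k + 1)) | (∀ i, x i ∈ Set.Icc (0 : ℝ) 1) ∧
    #{i | t < x i} < m ∧ ∑ i, x i = c}
  have hsplit := measureReal_union_le (μ := μH[(k : ℝ)]) A (S \ A)
  rw [Set.union_sdiff_cancel (show A ⊆ S from fun x hx => ⟨hx.1, hx.2.2⟩)] at hsplit
  have hbad := measureReal_le_of_subset_manyCoordsGt hmt (X := S \ A) fun x ⟨hxS, hxA⟩ =>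
      ⟨fun i => (hxS.1 i).1, not_lt.1 fun h => hxA ⟨hxS.1, h, hxS.2⟩, hxS.2⟩
  linarith

end Slice

theorem mul_pow_sub_one_ne_pow (c : ℕ) {N k : ℕ} (hN : 3 ≤ N) (hk : k ≠ 0) :
    c * (N - 1) ^ k ≠ N ^ k := fun h => by
  have hcop : Nat.Coprime ((N - 1) ^ k) (N ^ k) := by
    refine Nat.Coprime.pow _ _ ?_
    simpa [Nat.sub_add_cancel (by omega : 1 ≤ N)] using
      Nat.coprime_self_add_right.2 (Nat.coprime_one_right (N - 1))
  have h1 := hcop.eq_one_of_dvd ⟨c, by rw [← h, mul_comm]⟩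
  have h2 : 1 < (N - 1) ^ k := Nat.one_lt_pow hk (by omega)
  omega

theorem natCast_mul_div_pow_ne_one (c : ℕ) {N k : ℕ} (hN : 3 ≤ N) (hk : k ≠ 0) :
    (c : ℝ) * (((N : ℝ) - 1) / N) ^ k ≠ 1 := fun h => by
  rw [div_pow, mul_div_assoc', div_eq_one_iff_eq (by positivity)] at h
  refine mul_pow_sub_one_ne_pow c hN hk (Nat.cast_injective (R := ℝ) ?_)
  push_cast [Nat.cast_sub (by omega : 1 ≤ N)]
  exact h

theorem one_sub_div_le_div_of_sub_le {a s b p : ℝ} (hp : 0 < p) (hps : p ≤ s) (hb : 0 ≤ b)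
    (h : s - a ≤ b) : 1 - b / p ≤ a / s := by
  have hs : 0 < s := hp.trans_le hps
  calc 1 - b / p ≤ 1 - b / s := by gcongr
    _ = (s - b) / s := by field_simp
    _ ≤ a / s := by gcongr; linarith

theorem volume_ratio_lower_bound_general (d N m : ℕ) (t : ℝ)
    (h8 : 8 ≤ N) (hNd : 2 * N ≤ d)
    (hlarge : (d : ℝ) * (((N : ℝ) - 1) / N) ^ (d - 1) ≤ 1)
    (hm2 : m ≤ N - 7)
    (ht : t = ((N : ℝ) - m + 1) / ((N : ℝ) - m + 9)) :
    1 - (d.choose m : ℝ) * ((N : ℝ) - m * t) ^ (d - 1) /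
        ((1 - (d : ℝ) * (((N : ℝ) - 1) / N) ^ (d - 1)) * (N : ℝ) ^ (d - 1)) ≤
      (μH[(d : ℝ) - 1]
          {x : EuclideanSpace ℝ (Fin d) |
            (∀ i, x i ∈ Set.Icc (0 : ℝ) 1) ∧
              ((Finset.univ.filter fun i : Fin d => t < x i).card < m) ∧
              ∑ i, x i = (N : ℝ)}).toReal /
      (μH[(d : ℝ) - 1]
          {x : EuclideanSpace ℝ (Fin d) |
            (∀ i, x i ∈ Set.Icc (0 : ℝ) 1) ∧ ∑ i, x i = (N : ℝ)}).toReal := by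
  obtain ⟨k, rfl⟩ : ∃ k, d = k + 1 := ⟨d - 1, by omega⟩
  have hdim : ((k + 1 : ℕ) : ℝ) - 1 = k := by push_cast; ring
  simp only [Nat.add_sub_cancel, hdim, ← measureReal_def] at hlarge ⊢
  have hN : (3 : ℝ) ≤ N := by exact_mod_cast (by omega : 3 ≤ N)
  have hmt : m * t < N := by
    have hmN : (m : ℝ) ≤ N := by exact_mod_cast (by omega : m ≤ N)
    have ht0 : 0 < t := by rw [ht]; exact div_pos (by linarith) (by linarith)
    have ht1 : t < 1 := by rw [ht, div_lt_one (by linarith)]; linarith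
    nlinarith
  have hden : (1 - ((k + 1 : ℕ) : ℝ) * (((N : ℝ) - 1) / N) ^ k) * (N : ℝ) ^ k =
      (N : ℝ) ^ k - (k + 1) * ((N : ℝ) - 1) ^ k := by
    rw [div_pow]; field_simp; push_cast; ring
  have hlt := hlarge.lt_of_ne (natCast_mul_div_pow_ne_one (k + 1) (by omega) (by omega))
  have hΔ := ENNReal.toReal_pos (hausdorffMeasure_stdSimplex_pos k).ne'
    (hausdorffMeasure_stdSimplex_lt_top k).ne
  rw [hden, ← mul_div_mul_right _ _ hΔ.ne']
  refine one_sub_div_le_div_of_sub_le ?_ (measureReal_cubeSlice_ge (by linarith)) (by positivity)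
    (measureReal_cubeSlice_sub_le hmt)
  exact mul_pos (hden ▸ mul_pos (sub_pos.2 hlt) (by positivity)) hΔ

/-- **Volume-ratio bound.** For integers `8 ≤ N ≤ d/2` with
`d((N−1)/N)^{d−1} ≤ 1`, any integer `1 ≤ m ≤ N−7` and `t = (N−m+1)/(N−m+9)`:
the `(d−1)`-volume fraction of the slice `{λ ∈ [0,1]^d : λ_{[m]} ≤ t, ∑λ = N}` inside
`{λ ∈ [0,1]^d : ∑λ = N}` is at least
`1 − C(d,m)(N−mt)^{d−1} / ((1 − d((N−1)/N)^{d−1}) N^{d−1})`. The condition `λ_{[m]} ≤ t`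
(the `m`-th largest entry is `≤ t`) says that fewer than `m` entries exceed `t`. -/
theorem volume_ratio_lower_bound (d N m : ℕ) (t : ℝ)
    (h8 : 8 ≤ N) (hNd : 2 * N ≤ d)
    (hlarge : (d : ℝ) * (((N : ℝ) - 1) / N) ^ (d - 1) ≤ 1)
    (hm1 : 1 ≤ m) (hm2 : m ≤ N - 7)
    (ht : t = ((N : ℝ) - m + 1) / ((N : ℝ) - m + 9)) :
    1 - (d.choose m : ℝ) * ((N : ℝ) - m * t) ^ (d - 1) /
        ((1 - (d : ℝ) * (((N : ℝ) - 1) / N) ^ (d - 1)) * (N : ℝ) ^ (d - 1)) ≤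
      (μH[(d : ℝ) - 1]
          {x : EuclideanSpace ℝ (Fin d) |
            (∀ i, x i ∈ Set.Icc (0 : ℝ) 1) ∧
              ((Finset.univ.filter fun i : Fin d => t < x i).card < m) ∧
              ∑ i, x i = (N : ℝ)}).toReal /
      (μH[(d : ℝ) - 1]
          {x : EuclideanSpace ℝ (Fin d) |
            (∀ i, x i ∈ Set.Icc (0 : ℝ) 1) ∧ ∑ i, x i = (N : ℝ)}).toReal :=
  volume_ratio_lower_bound_general d N m t h8 hNd hlarge hm2 ht
end
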